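/- arXiv:2107.06607 — 6 statements merged into one kernel-verified Lean document; each statement's English description precedes it below -/
import Mathlib

section
/- Let (X, 𝒜, μ₀) be a probability space, N a natural number, ρ ≥ 0, and Φ : X × ℝ^N → ℝ a jointly measurable function such that (a) 0 ≤ Φ(x, y) ≤ K for all x ∈ X and all y ∈ ℝ^N with ‖y‖ ≤ ρ, for some constant K ≥ 0, and (b) |Φ(x, y₁) − Φ(x, y₂)| ≤ M·‖y₁ − y₂‖ for all x ∈ X and all y₁, y₂ with ‖y₁‖, ‖y₂‖ ≤ ρ, for some constant M ≥ 0. For ‖y‖ ≤ ρ set Z(y) := ∫_X exp(−Φ(x, y)) dμ₀(x) and f_y(x) := exp(−Φ(x, y))/Z(y). Then there exists a constant C ≥ 0 (depending only on ρ, K, M) such that for all y₁, y₂ ∈ ℝ^N with ‖y₁‖ ≤ ρ and ‖y₂‖ ≤ ρ, the squared Hellinger distance satisfies (1/2)·∫_X (√(f_{y₁}(x)) − √(f_{y₂}(x)))² dμ₀(x) ≤ C²·‖y₁ − y₂‖². (Lipschitz–Hellinger well-posedness of the posterior, Theorem C.3.) -/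
/-!
For `‖y‖ ≤ ρ` the unnormalised density `g_y = exp (-Φ(·, y))` and its mass `Z(y) = ∫ g_y dμ₀`
both lie in `[e^{-K}, 1]`. As `t ↦ exp (-t)` is `1`-Lipschitz on `[0, ∞)`, `g_y` and `Z(y)`
move by at most `L = M‖y₁ - y₂‖`, hence `f_y = g_y / Z(y)` moves by at most `2 e^{2K} L`.
Since `f_y ≥ e^{-K}` and `√·` is `e^{K/2}/2`-Lipschitz on `[e^{-K}, ∞)`, this gives the
pointwise bound `(√f_{y₁} - √f_{y₂})² ≤ e^{5K} L²`, which integrates against the probability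
measure `μ₀`.
-/

open MeasureTheory Real

lemma abs_exp_neg_sub_exp_neg_le {a b : ℝ} (ha : 0 ≤ a) (hb : 0 ≤ b) :
    |exp (-a) - exp (-b)| ≤ |a - b| := by
  wlog hab : a ≤ b generalizing a b
  · rw [abs_sub_comm, abs_sub_comm a]
    exact this hb ha (le_of_not_ge hab)
  have hexp : exp (-a) - exp (-b) = exp (-a) * (1 - exp (-(b - a))) := by
    rw [mul_sub, ← exp_add]; ring_nf
  rw [abs_of_nonneg (sub_nonneg.2 (exp_le_exp.2 (neg_le_neg hab))),
    abs_of_nonpos (sub_nonpos.2 hab), hexp]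
  calc exp (-a) * (1 - exp (-(b - a))) ≤ 1 * (b - a) :=
        mul_le_mul (exp_le_one_iff.2 (neg_nonpos.2 ha)) (by linarith [one_sub_le_exp_neg (b - a)])
          (by simp [exp_le_one_iff, hab]) zero_le_one
    _ = -(a - b) := by ring

lemma four_mul_mul_sq_sqrt_sub_sqrt_le {m a b : ℝ} (hm : 0 ≤ m) (ha : m ≤ a) (hb : m ≤ b) :
    4 * m * (√a - √b) ^ 2 ≤ (a - b) ^ 2 := by
  have hsum : 2 * √m ≤ √a + √b := by linarith [sqrt_le_sqrt ha, sqrt_le_sqrt hb]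
  have hsq : 4 * m ≤ (√a + √b) ^ 2 := by
    calc 4 * m = (2 * √m) ^ 2 := by rw [mul_pow, sq_sqrt hm]; ring
      _ ≤ (√a + √b) ^ 2 := pow_le_pow_left₀ (by positivity) hsum 2
  calc 4 * m * (√a - √b) ^ 2 ≤ (√a + √b) ^ 2 * (√a - √b) ^ 2 :=
        mul_le_mul_of_nonneg_right hsq (sq_nonneg _)
    _ = (a - b) ^ 2 := by
      rw [← mul_pow, ← sq_sub_sq, sq_sqrt (hm.trans ha), sq_sqrt (hm.trans hb)]

lemma abs_div_sub_div_le {u v Z₁ Z₂ m : ℝ} (hm : 0 < m) (h₁ : m ≤ Z₁) (h₂ : m ≤ Z₂)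
    (hv : |v| ≤ 1) : |u / Z₁ - v / Z₂| ≤ |u - v| / m + |Z₁ - Z₂| / m ^ 2 := by
  have hZ₁ : 0 < Z₁ := hm.trans_le h₁
  have hZ₂ : 0 < Z₂ := hm.trans_le h₂
  have hsplit : u / Z₁ - v / Z₂ = (u - v) / Z₁ + v * (Z₂ - Z₁) / (Z₁ * Z₂) := by
    field_simp; ring
  rw [hsplit]
  refine (abs_add_le _ _).trans (add_le_add ?_ ?_)
  · rw [abs_div, abs_of_pos hZ₁]
    exact div_le_div_of_nonneg_left (abs_nonneg _) hm h₁
  · rw [abs_div, abs_mul, abs_of_pos (mul_pos hZ₁ hZ₂), abs_sub_comm, sq]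
    exact div_le_div₀ (abs_nonneg _) (mul_le_of_le_one_left (abs_nonneg _) hv)
      (mul_pos hm hm) (mul_le_mul h₁ h₂ hm.le hZ₁.le)

/-- The posterior density `f_y` of the paper is `gibbsDensity μ₀ (Φ · y)`. -/
noncomputable def gibbsDensity {X : Type*} [MeasurableSpace X] (μ : Measure X) (φ : X → ℝ)
    (x : X) : ℝ :=
  exp (-φ x) / ∫ x', exp (-φ x') ∂μ

section Gibbs

variable {X : Type*} [MeasurableSpace X] {μ : Measure X} {φ ψ : X → ℝ} {K L : ℝ}

lemma integrable_exp_neg [IsFiniteMeasure μ] (hφ : Measurable φ) (hφ₀ : ∀ x, 0 ≤ φ x) :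
    Integrable (fun x => exp (-φ x)) μ :=
  (integrable_const (1 : ℝ)).mono' hφ.neg.exp.aestronglyMeasurable
    (ae_of_all _ fun x => by
      rw [norm_of_nonneg (exp_pos _).le]
      exact exp_le_one_iff.2 (neg_nonpos.2 (hφ₀ x)))

variable [IsProbabilityMeasure μ]

lemma integral_exp_neg_le_one (hφ₀ : ∀ x, 0 ≤ φ x) : ∫ x, exp (-φ x) ∂μ ≤ 1 := by
  simpa using integral_mono_of_nonneg (μ := μ) (ae_of_all _ fun x => (exp_pos (-φ x)).le)
    (integrable_const (1 : ℝ)) (ae_of_all _ fun x => exp_le_one_iff.2 (neg_nonpos.2 (hφ₀ x)))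

lemma exp_neg_le_integral_exp_neg (hφ : Measurable φ) (hφ₀ : ∀ x, 0 ≤ φ x)
    (hφK : ∀ x, φ x ≤ K) : exp (-K) ≤ ∫ x, exp (-φ x) ∂μ := by
  simpa using integral_mono (μ := μ) (integrable_const (exp (-K)))
    (integrable_exp_neg hφ hφ₀) fun x => exp_le_exp.2 (neg_le_neg (hφK x))

lemma abs_integral_exp_neg_sub_le (hφ : Measurable φ) (hψ : Measurable ψ)
    (hφ₀ : ∀ x, 0 ≤ φ x) (hψ₀ : ∀ x, 0 ≤ ψ x) (hL : ∀ x, |φ x - ψ x| ≤ L) :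
    |∫ x, exp (-φ x) ∂μ - ∫ x, exp (-ψ x) ∂μ| ≤ L := by
  rw [← integral_sub (integrable_exp_neg hφ hφ₀) (integrable_exp_neg hψ hψ₀),
    ← norm_eq_abs]
  simpa using norm_integral_le_of_norm_le_const (μ := μ)
    (f := fun x => exp (-φ x) - exp (-ψ x)) (C := L) (ae_of_all _ fun x =>
    (abs_exp_neg_sub_exp_neg_le (hφ₀ x) (hψ₀ x)).trans (hL x))

lemma exp_neg_le_gibbsDensity (hφ : Measurable φ) (hφ₀ : ∀ x, 0 ≤ φ x)
    (hφK : ∀ x, φ x ≤ K) (x : X) : exp (-K) ≤ gibbsDensity μ φ x :=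
  calc exp (-K) ≤ exp (-φ x) := exp_le_exp.2 (neg_le_neg (hφK x))
    _ ≤ gibbsDensity μ φ x := le_div_self (exp_pos _).le
      ((exp_pos _).trans_le (exp_neg_le_integral_exp_neg hφ hφ₀ hφK))
      (integral_exp_neg_le_one hφ₀)

lemma abs_gibbsDensity_sub_le (hφ : Measurable φ) (hψ : Measurable ψ)
    (hφ₀ : ∀ x, 0 ≤ φ x) (hψ₀ : ∀ x, 0 ≤ ψ x) (hφK : ∀ x, φ x ≤ K) (hψK : ∀ x, ψ x ≤ K)
    (hL : ∀ x, |φ x - ψ x| ≤ L) (x : X) :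
    |gibbsDensity μ φ x - gibbsDensity μ ψ x| ≤ 2 * L / exp (-K) ^ 2 := by
  have hm : exp (-K) ≤ 1 := exp_le_one_iff.2 (by linarith [hφ₀ x, hφK x])
  have hL₀ : 0 ≤ L := (abs_nonneg _).trans (hL x)
  calc |gibbsDensity μ φ x - gibbsDensity μ ψ x|
      ≤ |exp (-φ x) - exp (-ψ x)| / exp (-K)
          + |∫ x, exp (-φ x) ∂μ - ∫ x, exp (-ψ x) ∂μ| / exp (-K) ^ 2 :=
        abs_div_sub_div_le (exp_pos _) (exp_neg_le_integral_exp_neg hφ hφ₀ hφK)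
          (exp_neg_le_integral_exp_neg hψ hψ₀ hψK)
          (by rw [abs_of_pos (exp_pos _)]; exact exp_le_one_iff.2 (neg_nonpos.2 (hψ₀ x)))
    _ ≤ L / exp (-K) + L / exp (-K) ^ 2 := by
        gcongr
        exacts [(abs_exp_neg_sub_exp_neg_le (hφ₀ x) (hψ₀ x)).trans (hL x),
          abs_integral_exp_neg_sub_le hφ hψ hφ₀ hψ₀ hL]
    _ ≤ L / exp (-K) ^ 2 + L / exp (-K) ^ 2 := by
        gcongr
        exact pow_le_of_le_one (exp_pos _).le hm two_ne_zero
    _ = 2 * L / exp (-K) ^ 2 := by ring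

lemma sq_sqrt_gibbsDensity_sub_le (hφ : Measurable φ) (hψ : Measurable ψ)
    (hφ₀ : ∀ x, 0 ≤ φ x) (hψ₀ : ∀ x, 0 ≤ ψ x) (hφK : ∀ x, φ x ≤ K) (hψK : ∀ x, ψ x ≤ K)
    (hL : ∀ x, |φ x - ψ x| ≤ L) (x : X) :
    (√(gibbsDensity μ φ x) - √(gibbsDensity μ ψ x)) ^ 2 ≤ exp (5 * K) * L ^ 2 := by
  have hdiff := abs_gibbsDensity_sub_le (μ := μ) hφ hψ hφ₀ hψ₀ hφK hψK hL x
  have hsqrt := four_mul_mul_sq_sqrt_sub_sqrt_le (exp_pos (-K)).le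
    (exp_neg_le_gibbsDensity (μ := μ) hφ hφ₀ hφK x)
    (exp_neg_le_gibbsDensity (μ := μ) hψ hψ₀ hψK x)
  set m := exp (-K) with hm
  have hkey : 4 * m * (√(gibbsDensity μ φ x) - √(gibbsDensity μ ψ x)) ^ 2 * (m ^ 2) ^ 2
      ≤ (2 * L) ^ 2 := by
    rw [← le_div_iff₀ (by positivity), ← div_pow]
    exact hsqrt.trans (sq_le_sq' (abs_le.1 hdiff).1 (abs_le.1 hdiff).2)
  have h5 : exp (5 * K) = (m ^ 5)⁻¹ := by
    rw [hm, ← exp_nat_mul, ← exp_neg]; ring_nf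
  rw [h5, inv_mul_eq_div, le_div_iff₀ (by positivity)]
  linear_combination hkey / 4

theorem integral_sq_sqrt_gibbsDensity_sub_le (hφ : Measurable φ) (hψ : Measurable ψ)
    (hφ₀ : ∀ x, 0 ≤ φ x) (hψ₀ : ∀ x, 0 ≤ ψ x) (hφK : ∀ x, φ x ≤ K) (hψK : ∀ x, ψ x ≤ K)
    (hL : ∀ x, |φ x - ψ x| ≤ L) :
    ∫ x, (√(gibbsDensity μ φ x) - √(gibbsDensity μ ψ x)) ^ 2 ∂μ ≤ exp (5 * K) * L ^ 2 := by
  simpa using integral_mono_of_nonneg (μ := μ) (ae_of_all _ fun x => sq_nonneg _)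
    (integrable_const (exp (5 * K) * L ^ 2))
    (ae_of_all _ (sq_sqrt_gibbsDensity_sub_le hφ hψ hφ₀ hψ₀ hφK hψK hL))

end Gibbs

theorem hellinger_well_posedness_general
    {X : Type*} [MeasurableSpace X] (μ₀ : Measure X) [IsProbabilityMeasure μ₀]
    (N : ℕ) (ρ : ℝ)
    (Φ : X → EuclideanSpace ℝ (Fin N) → ℝ)
    (hΦmeas : Measurable fun p : X × EuclideanSpace ℝ (Fin N) => Φ p.1 p.2)
    (K : ℝ)
    (hbound : ∀ (x : X) (y : EuclideanSpace ℝ (Fin N)), ‖y‖ ≤ ρ →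
      0 ≤ Φ x y ∧ Φ x y ≤ K)
    (M : ℝ) (hM : 0 ≤ M)
    (hlip : ∀ (x : X) (y₁ y₂ : EuclideanSpace ℝ (Fin N)), ‖y₁‖ ≤ ρ → ‖y₂‖ ≤ ρ →
      |Φ x y₁ - Φ x y₂| ≤ M * ‖y₁ - y₂‖) :
    ∃ C : ℝ, 0 ≤ C ∧
      ∀ y₁ y₂ : EuclideanSpace ℝ (Fin N), ‖y₁‖ ≤ ρ → ‖y₂‖ ≤ ρ →
        (1 / 2) * ∫ x,
            (Real.sqrt (Real.exp (-Φ x y₁) / ∫ x', Real.exp (-Φ x' y₁) ∂μ₀) -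
              Real.sqrt (Real.exp (-Φ x y₂) / ∫ x', Real.exp (-Φ x' y₂) ∂μ₀)) ^ 2 ∂μ₀
          ≤ C ^ 2 * ‖y₁ - y₂‖ ^ 2 := by
  refine ⟨exp (5 * K / 2) * M, by positivity, fun y₁ y₂ hy₁ hy₂ => ?_⟩
  have hmeas (y : EuclideanSpace ℝ (Fin N)) : Measurable fun x => Φ x y :=
    hΦmeas.of_uncurry_right (f := Φ)
  have hdist : ∫ x, (√(gibbsDensity μ₀ (Φ · y₁) x) - √(gibbsDensity μ₀ (Φ · y₂) x)) ^ 2 ∂μ₀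
      ≤ exp (5 * K) * (M * ‖y₁ - y₂‖) ^ 2 :=
    integral_sq_sqrt_gibbsDensity_sub_le (hmeas y₁) (hmeas y₂)
      (fun x => (hbound x y₁ hy₁).1) (fun x => (hbound x y₂ hy₂).1)
      (fun x => (hbound x y₁ hy₁).2) (fun x => (hbound x y₂ hy₂).2)
      (fun x => hlip x y₁ y₂ hy₁ hy₂)
  have hC : exp (5 * K / 2) ^ 2 = exp (5 * K) := by
    rw [← exp_nat_mul]; ring_nf
  rw [mul_pow, hC, mul_assoc, ← mul_pow, one_div_mul_eq_div]
  exact (half_le_self (integral_nonneg fun x => sq_nonneg _)).trans hdist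

/-- Lipschitz–Hellinger well-posedness of the posterior (Theorem C.3): under
boundedness and Lipschitz continuity (in the data) of the negative
log-likelihood, the squared Hellinger distance between the posteriors for two
data vectors is bounded by a constant times the squared distance of the data. -/
theorem hellinger_well_posedness
    {X : Type*} [MeasurableSpace X] (μ₀ : Measure X) [IsProbabilityMeasure μ₀]
    (N : ℕ) (ρ : ℝ) (hρ : 0 ≤ ρ)
    (Φ : X → EuclideanSpace ℝ (Fin N) → ℝ)
    (hΦmeas : Measurable fun p : X × EuclideanSpace ℝ (Fin N) => Φ p.1 p.2)
    (K : ℝ) (hK : 0 ≤ K)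
    (hbound : ∀ (x : X) (y : EuclideanSpace ℝ (Fin N)), ‖y‖ ≤ ρ →
      0 ≤ Φ x y ∧ Φ x y ≤ K)
    (M : ℝ) (hM : 0 ≤ M)
    (hlip : ∀ (x : X) (y₁ y₂ : EuclideanSpace ℝ (Fin N)), ‖y₁‖ ≤ ρ → ‖y₂‖ ≤ ρ →
      |Φ x y₁ - Φ x y₂| ≤ M * ‖y₁ - y₂‖) :
    ∃ C : ℝ, 0 ≤ C ∧
      ∀ y₁ y₂ : EuclideanSpace ℝ (Fin N), ‖y₁‖ ≤ ρ → ‖y₂‖ ≤ ρ →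
        (1 / 2) * ∫ x,
            (Real.sqrt (Real.exp (-Φ x y₁) / ∫ x', Real.exp (-Φ x' y₁) ∂μ₀) -
              Real.sqrt (Real.exp (-Φ x y₂) / ∫ x', Real.exp (-Φ x' y₂) ∂μ₀)) ^ 2 ∂μ₀
          ≤ C ^ 2 * ‖y₁ - y₂‖ ^ 2 :=
  hellinger_well_posedness_general μ₀ N ρ Φ hΦmeas K hbound M hM hlip
end

section
/- Let (X, 𝒜, μ₀) be a probability space, N a natural number, ρ ≥ 0, and Φ : X × ℝ^N → ℝ a jointly measurable function such that Φ(x, y) ≥ 0 for all x and all ‖y‖ ≤ ρ, and |Φ(x, y₁) − Φ(x, y₂)| ≤ M·‖y₁ − y₂‖ for all x ∈ X and all y₁, y₂ with ‖y₁‖, ‖y₂‖ ≤ ρ, for some constant M ≥ 0. Then the normalization constant Z(y) := ∫_X exp(−Φ(x, y)) dμ₀(x) satisfies |Z(y₁) − Z(y₂)| ≤ M·‖y₁ − y₂‖ for all y₁, y₂ with ‖y₁‖, ‖y₂‖ ≤ ρ. (Lipschitz dependence of the normalization constant on the data, an intermediate step in the Hellinger well-posedness proof.) -/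
open MeasureTheory

namespace Real

theorem abs_exp_neg_sub_exp_neg_le {a b : ℝ} (ha : 0 ≤ a) (hb : 0 ≤ b) :
    |exp (-a) - exp (-b)| ≤ |a - b| := by
  wlog hab : a ≤ b generalizing a b
  · rw [abs_sub_comm, abs_sub_comm a b]
    exact this hb ha (le_of_not_ge hab)
  have hfactor : exp (-a) - exp (-b) = exp (-a) * (1 - exp (-(b - a))) := by
    rw [mul_sub, mul_one, ← exp_add]
    ring_nf
  rw [abs_of_nonneg (sub_nonneg.2 (exp_le_exp.2 (neg_le_neg hab))), abs_sub_comm,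
    abs_of_nonneg (sub_nonneg.2 hab), hfactor]
  calc exp (-a) * (1 - exp (-(b - a))) ≤ 1 * (b - a) :=
        mul_le_mul (exp_le_one_iff.2 (neg_nonpos.2 ha)) (by linarith [one_sub_le_exp_neg (b - a)])
          (sub_nonneg.2 (exp_le_one_iff.2 (by linarith))) zero_le_one
    _ = b - a := one_mul _

end Real

section

variable {α G : Type*} [MeasurableSpace α] {μ : Measure α}
  [NormedAddCommGroup G] [NormedSpace ℝ G]

theorem norm_integral_sub_integral_le_of_norm_sub_le [IsProbabilityMeasure μ] {f g : α → G}
    (hf : Integrable f μ) (hg : Integrable g μ) {C : ℝ} (hfg : ∀ᵐ x ∂μ, ‖f x - g x‖ ≤ C) :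
    ‖∫ x, f x ∂μ - ∫ x, g x ∂μ‖ ≤ C := by
  rw [← integral_sub hf hg]
  simpa using norm_integral_le_of_norm_le_const hfg

theorem integrable_exp_neg_of_nonneg [IsFiniteMeasure μ] {f : α → ℝ} (hf : Measurable f)
    (hf_nonneg : ∀ᵐ x ∂μ, 0 ≤ f x) : Integrable (fun x => Real.exp (-f x)) μ :=
  Integrable.of_bound hf.neg.exp.aestronglyMeasurable 1 <| hf_nonneg.mono fun x hx => by
    rw [Real.norm_of_nonneg (Real.exp_pos _).le]
    exact Real.exp_le_one_iff.2 (neg_nonpos.2 hx)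

end

theorem normalization_constant_lipschitz_general
    {X : Type*} [MeasurableSpace X] (μ₀ : Measure X) [IsProbabilityMeasure μ₀]
    (N : ℕ) (ρ : ℝ)
    (Φ : X → EuclideanSpace ℝ (Fin N) → ℝ)
    (hΦmeas : Measurable fun p : X × EuclideanSpace ℝ (Fin N) => Φ p.1 p.2)
    (hΦnonneg : ∀ (x : X) (y : EuclideanSpace ℝ (Fin N)), ‖y‖ ≤ ρ → 0 ≤ Φ x y)
    (M : ℝ)
    (hlip : ∀ (x : X) (y₁ y₂ : EuclideanSpace ℝ (Fin N)), ‖y₁‖ ≤ ρ → ‖y₂‖ ≤ ρ →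
      |Φ x y₁ - Φ x y₂| ≤ M * ‖y₁ - y₂‖) :
    ∀ y₁ y₂ : EuclideanSpace ℝ (Fin N), ‖y₁‖ ≤ ρ → ‖y₂‖ ≤ ρ →
      |(∫ x, Real.exp (-Φ x y₁) ∂μ₀) - ∫ x, Real.exp (-Φ x y₂) ∂μ₀| ≤
        M * ‖y₁ - y₂‖ := by
  intro y₁ y₂ h₁ h₂
  have hint : ∀ y, ‖y‖ ≤ ρ → Integrable (fun x => Real.exp (-Φ x y)) μ₀ := fun y hy =>
    integrable_exp_neg_of_nonneg hΦmeas.of_uncurry_right (ae_of_all _ fun x => hΦnonneg x y hy)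
  refine norm_integral_sub_integral_le_of_norm_sub_le (hint y₁ h₁) (hint y₂ h₂)
    (ae_of_all _ fun x => ?_)
  exact (Real.abs_exp_neg_sub_exp_neg_le (hΦnonneg x y₁ h₁) (hΦnonneg x y₂ h₂)).trans
    (hlip x y₁ y₂ h₁ h₂)

/-- Lipschitz dependence of the normalization constant `Z(y) = ∫ exp(-Φ(x,y)) dμ₀`
on the data, an intermediate step in the Hellinger well-posedness proof. -/
theorem normalization_constant_lipschitz
    {X : Type*} [MeasurableSpace X] (μ₀ : Measure X) [IsProbabilityMeasure μ₀]
    (N : ℕ) (ρ : ℝ) (hρ : 0 ≤ ρ)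
    (Φ : X → EuclideanSpace ℝ (Fin N) → ℝ)
    (hΦmeas : Measurable fun p : X × EuclideanSpace ℝ (Fin N) => Φ p.1 p.2)
    (hΦnonneg : ∀ (x : X) (y : EuclideanSpace ℝ (Fin N)), ‖y‖ ≤ ρ → 0 ≤ Φ x y)
    (M : ℝ) (hM : 0 ≤ M)
    (hlip : ∀ (x : X) (y₁ y₂ : EuclideanSpace ℝ (Fin N)), ‖y₁‖ ≤ ρ → ‖y₂‖ ≤ ρ →
      |Φ x y₁ - Φ x y₂| ≤ M * ‖y₁ - y₂‖) :
    ∀ y₁ y₂ : EuclideanSpace ℝ (Fin N), ‖y₁‖ ≤ ρ → ‖y₂‖ ≤ ρ →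
      |(∫ x, Real.exp (-Φ x y₁) ∂μ₀) - ∫ x, Real.exp (-Φ x y₂) ∂μ₀| ≤
        M * ‖y₁ - y₂‖ :=
  normalization_constant_lipschitz_general μ₀ N ρ Φ hΦmeas hΦnonneg M hlip
end

section
/- For a center c ∈ ℝ² and a continuous 2π-periodic function ξ : ℝ → ℝ, let D₁(ξ, c) := {x ∈ ℝ² : ‖x − c‖ < exp(ξ(θ(x − c)))}, where θ(v) ∈ (−π, π] denotes the polar angle of v (the argument of v₁ + i v₂, with θ(0) := 0). Suppose ξ is Lipschitz continuous and 2π-periodic, (ξₙ) is a sequence of continuous 2π-periodic functions with sup_{t∈ℝ} |ξₙ(t) − ξ(t)| → 0, and (cₙ) is a sequence in ℝ² with cₙ → c. Then the two-dimensional Lebesgue measure of the symmetric difference D₁(ξₙ, cₙ) Δ D₁(ξ, c) tends to 0 as n → ∞; in particular the indicator fields converge in measure. (Continuity in measure of the star-shaped parameterization, Proposition B.1.) -/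
open MeasureTheory Filter
open scoped Topology symmDiff

/-- The polar angle `θ(v) ∈ (-π, π]` of a vector `v ∈ ℝ²`, i.e. the argument of
`v₁ + i v₂` (with `θ(0) = 0`). -/
noncomputable def polarAngle (v : EuclideanSpace ℝ (Fin 2)) : ℝ :=
  Complex.arg ⟨v 0, v 1⟩

/-- The star-shaped region with center `c` and log-radial boundary function `ξ`:
`D₁(ξ, c) = {x ∈ ℝ² : ‖x - c‖ < exp(ξ(θ(x - c)))}`. -/
noncomputable def starRegion (ξ : ℝ → ℝ) (c : EuclideanSpace ℝ (Fin 2)) :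
    Set (EuclideanSpace ℝ (Fin 2)) :=
  {x | ‖x - c‖ < Real.exp (ξ (polarAngle (x - c)))}

/-! The radial graph `‖x - c‖ = exp (ξ (θ (x - c)))` lies on the curve `t ↦ c + exp (ξ t + i t)`,
which is locally Lipschitz when `ξ` is, hence has Hausdorff dimension at most one and is
Lebesgue-null. Away from this curve and from `c`, membership of `x` in `D₁(ξₙ, cₙ)` eventually
agrees with membership in `D₁(ξ, c)`: `‖x - cₙ‖ → ‖x - c‖`, and `ξₙ (θ (x - cₙ)) → ξ (θ (x - c))`
because `ξ ∘ θ` is continuous away from `0` (periodicity of `ξ` absorbs the jump of `θ` across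
the negative axis). All regions eventually lie in a fixed ball, so dominated convergence applies. -/

open Complex Function Metric Set
open scoped Real

local notation "ℝ²" => EuclideanSpace ℝ (Fin 2)

theorem addHaar_eq_zero_of_dimH_lt_finrank {E : Type*} [NormedAddCommGroup E]
    [NormedSpace ℝ E] [FiniteDimensional ℝ E] [MeasurableSpace E] [BorelSpace E]
    (μ : Measure E) [μ.IsAddHaarMeasure] {s : Set E} (hs : dimH s < Module.finrank ℝ E) :
    μ s = 0 := by
  have hμ : μ ≪ μH[((Module.finrank ℝ E : NNReal) : ℝ)] := by
    rw [NNReal.coe_natCast]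
    exact Measure.absolutelyContinuous_isAddHaarMeasure _ _
  exact measure_zero_of_dimH_lt hμ (by simpa using hs)

theorem tendsto_measure_symmDiff_of_ae_eventually_mem_iff {α ι : Type*} [MeasurableSpace α]
    {μ : Measure α} {l : Filter ι} [l.IsCountablyGenerated] {s : ι → Set α} {t B : Set α}
    (hs : ∀ i, MeasurableSet (s i)) (ht : MeasurableSet t) (hB : μ B ≠ ⊤)
    (hsB : ∀ᶠ i in l, s i ⊆ B) (htB : t ⊆ B) (h : ∀ᵐ x ∂μ, ∀ᶠ i in l, x ∈ s i ↔ x ∈ t) :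
    Tendsto (fun i => μ (s i ∆ t)) l (𝓝 0) := by
  have hsymm : ∀ᵐ x ∂μ, ∀ᶠ i in l, x ∈ s i ∆ t ↔ x ∈ (∅ : Set α) := by
    filter_upwards [h] with x hx
    filter_upwards [hx] with i hi
    simp only [mem_symmDiff, hi, mem_empty_iff_false]
    tauto
  have hsymmB : ∀ᶠ i in l, s i ∆ t ⊆ toMeasurable μ B := by
    filter_upwards [hsB] with i hi
    exact symmDiff_subset_union.trans ((union_subset hi htB).trans (subset_toMeasurable μ B))
  simpa using tendsto_measure_of_ae_tendsto_indicator l MeasurableSet.empty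
    (fun i => (hs i).symmDiff ht) (measurableSet_toMeasurable μ B)
    (by rwa [measure_toMeasurable]) hsymmB hsymm

-- the isometry `ℂ ≃ ℝ²`, `z ↦ (re z, im z)`
local notation "toPlane" => Complex.orthonormalBasisOneI.repr

theorem polarAngle_eq_arg (v : ℝ²) : polarAngle v = arg ((toPlane).symm v) := by
  rw [orthonormalBasisOneI_repr_symm_apply, ← mk_eq_add_mul_I]
  rfl

theorem measurable_polarAngle : Measurable polarAngle := by
  rw [show polarAngle = arg ∘ (toPlane).symm from funext polarAngle_eq_arg]
  exact measurable_arg.comp (toPlane).symm.continuous.measurable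

theorem Function.Periodic.continuousAt_comp_arg {ξ : ℝ → ℝ} (hξ : Continuous ξ)
    (hper : Periodic ξ (2 * π)) {z : ℂ} (hz : z ≠ 0) :
    ContinuousAt (fun w => ξ (arg w)) z := by
  have hlift : Continuous hper.lift := (QuotientAddGroup.isQuotientMap_mk _).continuous_iff.2 hξ
  exact hlift.continuousAt.comp (continuousAt_arg_coe_angle hz)

theorem Function.Periodic.continuousAt_comp_polarAngle {ξ : ℝ → ℝ} (hξ : Continuous ξ)
    (hper : Periodic ξ (2 * π)) {v : ℝ²} (hv : v ≠ 0) :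
    ContinuousAt (fun w => ξ (polarAngle w)) v := by
  simp only [polarAngle_eq_arg]
  exact (hper.continuousAt_comp_arg hξ ((map_ne_zero_iff _ (toPlane).symm.injective).2 hv)).comp
    (toPlane).symm.continuous.continuousAt

theorem measurableSet_starRegion {ξ : ℝ → ℝ} (hξ : Measurable ξ) (c : ℝ²) :
    MeasurableSet (starRegion ξ c) :=
  measurableSet_lt (by fun_prop) (Real.measurable_exp.comp (hξ.comp (measurable_polarAngle.comp
    (measurable_id.sub_const c))))

theorem starRegion_subset_ball {ξ : ℝ → ℝ} {M : ℝ} (hM : ∀ t, ξ t ≤ M) (c : ℝ²) :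
    starRegion ξ c ⊆ ball c (Real.exp M) := fun x hx => by
  rw [mem_ball, dist_eq_norm]
  exact hx.trans_le (Real.exp_le_exp.2 (hM _))

theorem eventually_starRegion_subset_ball {ι : Type*} {l : Filter ι} {ξ : ℝ → ℝ} {M : ℝ}
    (hM : ∀ t, ξ t ≤ M) {ξs : ι → ℝ → ℝ} (hunif : TendstoUniformly ξs ξ l) {cs : ι → ℝ²}
    {c : ℝ²} (hc : Tendsto cs l (𝓝 c)) :
    ∀ᶠ i in l, starRegion (ξs i) (cs i) ⊆ ball c (Real.exp (M + 1) + 1) := by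
  filter_upwards [Metric.tendstoUniformly_iff.1 hunif 1 one_pos,
    hc.eventually (ball_mem_nhds c one_pos)] with i hξi hci
  have hMi : ∀ t, ξs i t ≤ M + 1 := fun t => by
    have := hξi t
    rw [Real.dist_eq, abs_sub_lt_iff] at this
    linarith [hM t]
  exact (starRegion_subset_ball hMi _).trans (ball_subset_ball' (by linarith [mem_ball.1 hci]))

def starBoundary (ξ : ℝ → ℝ) (c : ℝ²) : Set ℝ² :=
  {x | ‖x - c‖ = Real.exp (ξ (polarAngle (x - c)))}

noncomputable def starCurve (ξ : ℝ → ℝ) (c : ℝ²) (t : ℝ) : ℝ² :=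
  c + toPlane (exp ⟨ξ t, t⟩)

theorem LocallyLipschitz.starCurve {ξ : ℝ → ℝ} (hξ : LocallyLipschitz ξ) (c : ℝ²) :
    LocallyLipschitz (starCurve ξ c) :=
  ((IsometryEquiv.addLeft c).isometry.comp (toPlane).isometry).lipschitz.locallyLipschitz.comp <|
    (contDiff_exp (𝕜 := ℂ)).locallyLipschitz.comp <|
      equivRealProdCLM.symm.lipschitz.locallyLipschitz.comp (hξ.prodMk LocallyLipschitz.id)

theorem starBoundary_subset_range_starCurve (ξ : ℝ → ℝ) (c : ℝ²) :
    starBoundary ξ c ⊆ range (starCurve ξ c) := by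
  intro x hx
  refine ⟨polarAngle (x - c), ?_⟩
  set z := (toPlane).symm (x - c)
  have hnorm : ‖z‖ = Real.exp (ξ (arg z)) := by
    rw [LinearIsometryEquiv.norm_map, ← polarAngle_eq_arg]
    exact hx
  have hz : exp ⟨ξ (arg z), arg z⟩ = z :=
    calc exp ⟨ξ (arg z), arg z⟩ = ‖z‖ * exp (arg z * I) := by
          rw [mk_eq_add_mul_I, exp_add, ← ofReal_exp, hnorm]
      _ = z := norm_mul_exp_arg_mul_I z
  rw [starCurve, polarAngle_eq_arg, hz, LinearIsometryEquiv.apply_symm_apply, add_sub_cancel]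

theorem volume_starBoundary {ξ : ℝ → ℝ} (hξ : LocallyLipschitz ξ) (c : ℝ²) :
    volume (starBoundary ξ c) = 0 := by
  refine measure_mono_null (starBoundary_subset_range_starCurve ξ c) ?_
  refine addHaar_eq_zero_of_dimH_lt_finrank volume ?_
  calc dimH (range (starCurve ξ c)) ≤ dimH (univ : Set ℝ) :=
        dimH_range_le_of_locally_lipschitzOn (hξ.starCurve c)
    _ < Module.finrank ℝ ℝ² := by rw [Real.dimH_univ, finrank_euclideanSpace_fin]; norm_num

theorem eventually_mem_starRegion_iff {ι : Type*} {l : Filter ι} {ξ : ℝ → ℝ}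
    (hξ : Continuous ξ) (hper : Periodic ξ (2 * π)) {ξs : ι → ℝ → ℝ}
    (hunif : TendstoUniformly ξs ξ l) {cs : ι → ℝ²} {c : ℝ²} (hc : Tendsto cs l (𝓝 c))
    {x : ℝ²} (hxc : x ≠ c) (hx : x ∉ starBoundary ξ c) :
    ∀ᶠ i in l, x ∈ starRegion (ξs i) (cs i) ↔ x ∈ starRegion ξ c := by
  have hxcs : Tendsto (fun i => x - cs i) l (𝓝 (x - c)) := tendsto_const_nhds.sub hc
  have hradius : Tendsto (fun i => Real.exp (ξs i (polarAngle (x - cs i)))) l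
      (𝓝 (Real.exp (ξ (polarAngle (x - c))))) :=
    (Real.continuous_exp.tendsto _).comp <| (hunif.comp polarAngle).tendsto_comp
      (hper.continuousAt_comp_polarAngle hξ (sub_ne_zero.2 hxc)) hxcs
  rcases lt_or_gt_of_ne hx with hlt | hgt
  · filter_upwards [hxcs.norm.eventually_lt hradius hlt] with i hi
    exact iff_of_true hi hlt
  · filter_upwards [hradius.eventually_lt hxcs.norm hgt] with i hi
    exact iff_of_false hi.not_gt hgt.not_gt

theorem starRegion_continuous_in_measure_general
    (ξ : ℝ → ℝ) (L : NNReal) (hξlip : LipschitzWith L ξ)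
    (hξper : Function.Periodic ξ (2 * Real.pi))
    (ξn : ℕ → ℝ → ℝ) (hcont : ∀ n, Continuous (ξn n))
    (hunif : TendstoUniformly ξn ξ atTop)
    (cn : ℕ → EuclideanSpace ℝ (Fin 2)) (c : EuclideanSpace ℝ (Fin 2))
    (hc : Tendsto cn atTop (𝓝 c)) :
    Tendsto (fun n => volume (starRegion (ξn n) (cn n) ∆ starRegion ξ c))
      atTop (𝓝 0) := by
  obtain ⟨M, hM⟩ := (hξper.compact_of_continuous Real.two_pi_pos.ne' hξlip.continuous).bddAbove
  have hξM : ∀ t, ξ t ≤ M := fun t => hM (mem_range_self t)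
  have hξB : starRegion ξ c ⊆ ball c (Real.exp (M + 1) + 1) :=
    (starRegion_subset_ball hξM c).trans
      (ball_subset_ball (by linarith [Real.exp_le_exp.2 (by linarith : M ≤ M + 1)]))
  have hnull : volume ({c} ∪ starBoundary ξ c) = 0 :=
    measure_union_null (measure_singleton c) (volume_starBoundary hξlip.locallyLipschitz c)
  refine tendsto_measure_symmDiff_of_ae_eventually_mem_iff
    (fun n => measurableSet_starRegion (hcont n).measurable (cn n))
    (measurableSet_starRegion hξlip.continuous.measurable c) measure_ball_lt_top.ne
    (eventually_starRegion_subset_ball hξM hunif hc) hξB ?_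
  filter_upwards [measure_eq_zero_iff_ae_notMem.1 hnull] with x hx
  rw [mem_union, not_or, mem_singleton_iff] at hx
  exact eventually_mem_starRegion_iff hξlip.continuous hξper hunif hc hx.1 hx.2

/-- Continuity in measure of the star-shaped parameterization (Proposition B.1):
if `ξₙ → ξ` uniformly (with `ξ` Lipschitz, all functions `2π`-periodic) and
`cₙ → c`, then the Lebesgue measure of the symmetric difference
`D₁(ξₙ, cₙ) ∆ D₁(ξ, c)` tends to `0`. -/
theorem starRegion_continuous_in_measure
    (ξ : ℝ → ℝ) (L : NNReal) (hξlip : LipschitzWith L ξ)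
    (hξper : Function.Periodic ξ (2 * Real.pi))
    (ξn : ℕ → ℝ → ℝ) (hcont : ∀ n, Continuous (ξn n))
    (hper : ∀ n, Function.Periodic (ξn n) (2 * Real.pi))
    (hunif : TendstoUniformly ξn ξ atTop)
    (cn : ℕ → EuclideanSpace ℝ (Fin 2)) (c : EuclideanSpace ℝ (Fin 2))
    (hc : Tendsto cn atTop (𝓝 c)) :
    Tendsto (fun n => volume (starRegion (ξn n) (cn n) ∆ starRegion ξ c))
      atTop (𝓝 0) :=
  starRegion_continuous_in_measure_general ξ L hξlip hξper ξn hcont hunif cn c hc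
end

section
/- Let (D, 𝒜, μ) be a finite measure space, a⁻ < a⁺ real constants, ξ : D → ℝ measurable, and p ≥ 1 a real number. For any measurable ξ' : D → ℝ and ε > 0 with |ξ'(x) − ξ(x)| ≤ ε for all x ∈ D, the level-set fields F_ls[ξ] := a⁻·1_{{ξ < 0}} + a⁺·1_{{ξ ≥ 0}} and F_ls[ξ'] := a⁻·1_{{ξ' < 0}} + a⁺·1_{{ξ' ≥ 0}} satisfy ∫_D |F_ls[ξ'](x) − F_ls[ξ](x)|^p dμ(x) ≤ (a⁺ − a⁻)^p · μ({x ∈ D : |ξ(x)| ≤ ε}). (Pointwise Lᵖ perturbation bound for the level-set map: the fields can only differ where |ξ| ≤ ε.) -/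
/-! The two fields can differ only at points where `ξ` and `ξ'` have different signs, and
there `|ξ| ≤ |ξ' - ξ| ≤ ε`; where they differ, they differ by exactly `a⁺ - a⁻`. Hence
`|F_ls[ξ'] - F_ls[ξ]|ᵖ ≤ (a⁺ - a⁻)ᵖ · 1_{|ξ| ≤ ε}` pointwise, and it remains to integrate. -/

open MeasureTheory

/-- The level-set field `F_ls[ξ] = a⁻·1_{ξ<0} + a⁺·1_{ξ≥0}`. -/
noncomputable def levelSetField {D : Type*} (aminus aplus : ℝ) (ξ : D → ℝ) (x : D) : ℝ :=
  if ξ x < 0 then aminus else aplus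

section LevelSetField

variable {D : Type*} {aminus aplus : ℝ} {ξ ξ' : D → ℝ} {x : D}

theorem abs_le_abs_sub_of_levelSetField_ne
    (h : levelSetField aminus aplus ξ' x ≠ levelSetField aminus aplus ξ x) :
    |ξ x| ≤ |ξ' x - ξ x| := by
  unfold levelSetField at h
  split_ifs at h with hξ' hξ hξ
  · exact absurd rfl h
  · rw [abs_of_nonneg (not_lt.mp hξ)]
    linarith [neg_abs_le (ξ' x - ξ x)]
  · rw [abs_of_neg hξ]
    linarith [le_abs_self (ξ' x - ξ x), not_lt.mp hξ']
  · exact absurd rfl h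

theorem abs_levelSetField_sub_of_ne
    (h : levelSetField aminus aplus ξ' x ≠ levelSetField aminus aplus ξ x) :
    |levelSetField aminus aplus ξ' x - levelSetField aminus aplus ξ x| = |aplus - aminus| := by
  unfold levelSetField at h ⊢
  split_ifs at h ⊢
  · exact absurd rfl h
  · exact abs_sub_comm _ _
  · rfl
  · exact absurd rfl h

theorem abs_levelSetField_sub_rpow_le_indicator (hab : aminus ≤ aplus) {p ε : ℝ} (hp : p ≠ 0)
    (hclose : |ξ' x - ξ x| ≤ ε) :
    |levelSetField aminus aplus ξ' x - levelSetField aminus aplus ξ x| ^ p ≤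
      {y | |ξ y| ≤ ε}.indicator (fun _ => (aplus - aminus) ^ p) x := by
  by_cases h : levelSetField aminus aplus ξ' x = levelSetField aminus aplus ξ x
  · rw [h, sub_self, abs_zero, Real.zero_rpow hp]
    exact Set.indicator_nonneg (fun _ _ => Real.rpow_nonneg (sub_nonneg.mpr hab) p) x
  · have hx : x ∈ {y | |ξ y| ≤ ε} := (abs_le_abs_sub_of_levelSetField_ne h).trans hclose
    rw [Set.indicator_of_mem hx, abs_levelSetField_sub_of_ne h, abs_of_nonneg (sub_nonneg.mpr hab)]

end LevelSetField

theorem integral_le_mul_measureReal_of_le_indicator {α : Type*} [MeasurableSpace α]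
    {μ : Measure α} [IsFiniteMeasure μ] {f : α → ℝ} {s : Set α} {c : ℝ} (hc : 0 ≤ c)
    (hf₀ : ∀ x, 0 ≤ f x) (hf : ∀ x, f x ≤ s.indicator (fun _ => c) x) :
    ∫ x, f x ∂μ ≤ c * μ.real s := by
  set t := toMeasurable μ s
  have hft : ∀ x, f x ≤ t.indicator (fun _ => c) x := fun x =>
    (hf x).trans (Set.indicator_le_indicator_of_subset (subset_toMeasurable μ s) (fun _ => hc) x)
  calc ∫ x, f x ∂μ ≤ ∫ x, t.indicator (fun _ => c) x ∂μ :=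
        integral_mono_of_nonneg (.of_forall hf₀)
          ((integrable_const c).indicator (measurableSet_toMeasurable μ s)) (.of_forall hft)
    _ = c * μ.real s := by
        rw [integral_indicator_const _ (measurableSet_toMeasurable μ s), smul_eq_mul, mul_comm,
          measureReal_def, measure_toMeasurable, ← measureReal_def]

theorem levelSetField_Lp_perturbation_general
    {D : Type*} [MeasurableSpace D] (μ : Measure D) [IsFiniteMeasure μ]
    (aminus aplus : ℝ) (hab : aminus < aplus)
    (ξ ξ' : D → ℝ)
    (p : ℝ) (hp : 1 ≤ p)
    (ε : ℝ) (hclose : ∀ x, |ξ' x - ξ x| ≤ ε) :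
    ∫ x, |levelSetField aminus aplus ξ' x - levelSetField aminus aplus ξ x| ^ p ∂μ ≤
      (aplus - aminus) ^ p * (μ {x | |ξ x| ≤ ε}).toReal :=
  integral_le_mul_measureReal_of_le_indicator (Real.rpow_nonneg (sub_nonneg.mpr hab.le) p)
    (fun _ => Real.rpow_nonneg (abs_nonneg _) p)
    (fun x => abs_levelSetField_sub_rpow_le_indicator hab.le (by positivity) (hclose x))

/-- Pointwise `Lᵖ` perturbation bound for the level-set map: if `|ξ' - ξ| ≤ ε`
pointwise, then the `Lᵖ` distance of the level-set fields is controlled by the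
measure of the set where `|ξ| ≤ ε`. -/
theorem levelSetField_Lp_perturbation
    {D : Type*} [MeasurableSpace D] (μ : Measure D) [IsFiniteMeasure μ]
    (aminus aplus : ℝ) (hab : aminus < aplus)
    (ξ ξ' : D → ℝ) (hξ : Measurable ξ) (hξ' : Measurable ξ')
    (p : ℝ) (hp : 1 ≤ p)
    (ε : ℝ) (hε : 0 < ε) (hclose : ∀ x, |ξ' x - ξ x| ≤ ε) :
    ∫ x, |levelSetField aminus aplus ξ' x - levelSetField aminus aplus ξ x| ^ p ∂μ ≤
      (aplus - aminus) ^ p * (μ {x | |ξ x| ≤ ε}).toReal :=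
  levelSetField_Lp_perturbation_general μ aminus aplus hab ξ ξ' p hp ε hclose
end

section
/- Let (Ω, ℱ, ℙ) be a probability space, H a separable real Hilbert space, ξ : Ω → H strongly measurable with E‖ξ‖² < ∞, m := E ξ its Bochner mean, and Q : H → H a continuous linear operator satisfying ⟨Qζ, η⟩ = E[⟨ξ − m, ζ⟩·⟨ξ − m, η⟩] for all ζ, η ∈ H. Then for every Hilbert (orthonormal) basis (e_i)_{i ∈ ι} of H, the series of diagonal entries converges with ∑_{i ∈ ι} ⟨Q e_i, e_i⟩ = E‖ξ − m‖². In particular Q is trace-class with trace E‖ξ − m‖². (Trace-class property of the covariance operator, part of Theorem 2.1.) -/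
open MeasureTheory
open scoped RealInnerProductSpace

/-!
Parseval's identity gives `‖ξ ω - m‖² = ∑ᵢ ⟨ξ ω - m, eᵢ⟩²` pointwise, while `⟨Q eᵢ, eᵢ⟩` is the
integral of the `i`-th term. Integrating term by term (dominated convergence along the finite
partial sums, dominated by the integrable sum itself) gives the claim; this is legitimate because
an orthonormal family in a separable space is countable.
-/

section Orthonormal

variable {𝕜 E ι : Type*} [RCLike 𝕜] [NormedAddCommGroup E] [InnerProductSpace 𝕜 E]

theorem Orthonormal.dist_eq_sqrt_two {v : ι → E} (hv : Orthonormal 𝕜 v) {i j : ι} (hij : i ≠ j) :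
    dist (v i) (v j) = √2 := by
  have hsq : ‖v i - v j‖ ^ 2 = 2 := by
    rw [@norm_sub_sq 𝕜, hv.1 i, hv.1 j, hv.2 hij]
    norm_num
  rw [dist_eq_norm, ← hsq, Real.sqrt_sq (norm_nonneg _)]

theorem Orthonormal.countable [TopologicalSpace.SeparableSpace E] {v : ι → E}
    (hv : Orthonormal 𝕜 v) : Countable ι := by
  refine Pairwise.countable_of_isOpen_disjoint (s := fun i => Metric.ball (v i) (1 / 2))
    (fun i j hij => Metric.ball_disjoint_ball ?_) (fun _ => Metric.isOpen_ball)
    (fun _ => Metric.nonempty_ball.2 (by norm_num))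
  rw [hv.dist_eq_sqrt_two hij]
  norm_num [Real.lt_sqrt]

end Orthonormal

section HilbertBasis

variable {E ι : Type*} [NormedAddCommGroup E] [InnerProductSpace ℝ E]

theorem HilbertBasis.hasSum_inner_sq (b : HilbertBasis ι ℝ E) (x : E) :
    HasSum (fun i => ⟪x, b i⟫ ^ 2) (‖x‖ ^ 2) := by
  simpa only [real_inner_comm x, ← sq, real_inner_self_eq_norm_sq]
    using b.hasSum_inner_mul_inner x x

theorem HilbertBasis.hasSum_integral_inner_sq [TopologicalSpace.SeparableSpace E]
    {Ω : Type*} [MeasurableSpace Ω] {μ : Measure Ω} (b : HilbertBasis ι ℝ E) {X : Ω → E}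
    (hX : AEStronglyMeasurable X μ) (hint : Integrable (fun ω => ‖X ω‖ ^ 2) μ) :
    HasSum (fun i => ∫ ω, ⟪X ω, b i⟫ ^ 2 ∂μ) (∫ ω, ‖X ω‖ ^ 2 ∂μ) := by
  have : Countable ι := b.orthonormal.countable
  refine hasSum_integral_of_dominated_convergence (fun i ω => ⟪X ω, b i⟫ ^ 2)
    (fun i => (hX.inner aestronglyMeasurable_const).pow 2)
    (fun i => ae_of_all _ fun ω => (Real.norm_of_nonneg (sq_nonneg _)).le)
    (ae_of_all _ fun ω => (b.hasSum_inner_sq (X ω)).summable) ?_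
    (ae_of_all _ fun ω => b.hasSum_inner_sq (X ω))
  simpa only [(b.hasSum_inner_sq _).tsum_eq] using hint

end HilbertBasis

theorem MeasureTheory.integrable_sq_norm_sub_const {Ω E : Type*} [MeasurableSpace Ω]
    {μ : Measure Ω} [IsFiniteMeasure μ] [NormedAddCommGroup E] {X : Ω → E}
    (hX : AEStronglyMeasurable X μ) (hint : Integrable (fun ω => ‖X ω‖ ^ 2) μ) (c : E) :
    Integrable (fun ω => ‖X ω - c‖ ^ 2) μ :=
  (memLp_two_iff_integrable_sq_norm (hX.sub aestronglyMeasurable_const)).1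
    (((memLp_two_iff_integrable_sq_norm hX).2 hint).sub (memLp_const c))

theorem covariance_operator_trace_general
    {Ω : Type*} [MeasureSpace Ω] [IsProbabilityMeasure (volume : Measure Ω)]
    {H : Type*} [NormedAddCommGroup H] [InnerProductSpace ℝ H] [CompleteSpace H]
    [TopologicalSpace.SeparableSpace H]
    (ξ : Ω → H) (hmeas : StronglyMeasurable ξ)
    (hint : Integrable (fun ω => ‖ξ ω‖ ^ 2))
    (m : H)
    (Q : H →L[ℝ] H)
    (hQ : ∀ ζ η : H, ⟪Q ζ, η⟫ = ∫ ω, ⟪ξ ω - m, ζ⟫ * ⟪ξ ω - m, η⟫)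
    (ι : Type*) (b : HilbertBasis ι ℝ H) :
    HasSum (fun i => ⟪Q (b i), b i⟫) (∫ ω, ‖ξ ω - m‖ ^ 2) := by
  have hdiag : ∀ i, ⟪Q (b i), b i⟫ = ∫ ω, ⟪ξ ω - m, b i⟫ ^ 2 := fun i => by
    simp only [hQ, sq]
  simpa only [hdiag] using b.hasSum_integral_inner_sq (X := fun ω => ξ ω - m)
    (hmeas.aestronglyMeasurable.sub aestronglyMeasurable_const)
    (integrable_sq_norm_sub_const hmeas.aestronglyMeasurable hint m)

/-- Trace-class property of the covariance operator (part of Theorem 2.1): for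
every Hilbert basis `(e_i)` of `H`, the diagonal entries of the covariance
operator `Q` sum to `E‖ξ - m‖²`. -/
theorem covariance_operator_trace
    {Ω : Type*} [MeasureSpace Ω] [IsProbabilityMeasure (volume : Measure Ω)]
    {H : Type*} [NormedAddCommGroup H] [InnerProductSpace ℝ H] [CompleteSpace H]
    [TopologicalSpace.SeparableSpace H]
    (ξ : Ω → H) (hmeas : StronglyMeasurable ξ)
    (hint : Integrable (fun ω => ‖ξ ω‖ ^ 2))
    (m : H) (hm : m = ∫ ω, ξ ω)
    (Q : H →L[ℝ] H)
    (hQ : ∀ ζ η : H, ⟪Q ζ, η⟫ = ∫ ω, ⟪ξ ω - m, ζ⟫ * ⟪ξ ω - m, η⟫)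
    (ι : Type*) (b : HilbertBasis ι ℝ H) :
    HasSum (fun i => ⟪Q (b i), b i⟫) (∫ ω, ‖ξ ω - m‖ ^ 2) :=
  covariance_operator_trace_general ξ hmeas hint m Q hQ ι b
end

section
/- Let (Ω, ℱ, ℙ) be a probability space, H a separable real Hilbert space, m ∈ H, (e_i)_{i ∈ ℕ} an orthonormal family in H, and (λ_i)_{i ∈ ℕ} nonnegative reals with ∑_i λ_i < ∞. Let (β_i)_{i ∈ ℕ} be an independent family of real random variables, each with the standard Gaussian distribution N(0,1). Then for ℙ-almost every ω ∈ Ω, the Karhunen–Loève series m + ∑_{i ∈ ℕ} √(λ_i)·β_i(ω)·e_i converges in H (the partial sums form a convergent sequence in H). (Almost sure convergence of the Karhunen–Loève expansion, Theorem 2.2.) -/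
open MeasureTheory ProbabilityTheory Filter
open scoped Topology ENNReal NNReal

/-!
Since `E[λ_i β_i²] = λ_i`, monotone convergence gives `E[∑ λ_i β_i²] = ∑ λ_i < ∞`, so
`∑ λ_i β_i(ω)²` is finite for almost every `ω`. For an orthonormal family in a complete space
this is exactly the summability of `∑ √λ_i β_i(ω) e_i`.
-/

lemma integral_sq_gaussianReal (μ : ℝ) (v : ℝ≥0) :
    ∫ x, x ^ 2 ∂gaussianReal μ v = μ ^ 2 + v := by
  have h := variance_eq_sub (memLp_id_gaussianReal (μ := μ) (v := v) 2)
  rw [variance_id_gaussianReal] at h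
  simp only [Pi.pow_apply, id_eq] at h
  rw [integral_id_gaussianReal] at h
  linarith

lemma lintegral_ofReal_sq_gaussianReal (μ : ℝ) (v : ℝ≥0) :
    ∫⁻ x, ENNReal.ofReal (x ^ 2) ∂gaussianReal μ v = ENNReal.ofReal (μ ^ 2 + v) := by
  rw [← integral_sq_gaussianReal]
  exact (ofReal_integral_eq_lintegral_ofReal (memLp_id_gaussianReal 2).integrable_sq
    (ae_of_all _ fun x => sq_nonneg x)).symm

lemma lintegral_ofReal_sq_of_map_eq_gaussianReal {Ω : Type*} [MeasurableSpace Ω]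
    {P : Measure Ω} {X : Ω → ℝ} {μ : ℝ} {v : ℝ≥0} (hX : P.map X = gaussianReal μ v) :
    ∫⁻ ω, ENNReal.ofReal (X ω ^ 2) ∂P = ENNReal.ofReal (μ ^ 2 + v) := by
  have hXm : AEMeasurable X P := .of_map_ne_zero (by simp [hX, IsProbabilityMeasure.ne_zero])
  rw [← lintegral_ofReal_sq_gaussianReal, ← hX, lintegral_map' (by fun_prop) hXm]

lemma ae_summable_of_tsum_lintegral_ne_top {Ω : Type*} [MeasurableSpace Ω] {P : Measure Ω}
    {f : ℕ → Ω → ℝ} (hf_nonneg : ∀ i ω, 0 ≤ f i ω) (hf : ∀ i, AEMeasurable (f i) P)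
    (h : ∑' i, ∫⁻ ω, ENNReal.ofReal (f i ω) ∂P ≠ ∞) :
    ∀ᵐ ω ∂P, Summable fun i => f i ω := by
  have hF : ∀ i, AEMeasurable (fun ω => ENNReal.ofReal (f i ω)) P :=
    fun i => (hf i).ennreal_ofReal
  rw [← lintegral_tsum hF] at h
  filter_upwards [ae_lt_top' (AEMeasurable.tsum hF) h] with ω hω
  simpa [ENNReal.toReal_ofReal, hf_nonneg] using ENNReal.summable_toReal hω.ne

theorem Orthonormal.summable_smul_iff {ι H : Type*} [NormedAddCommGroup H]
    [InnerProductSpace ℝ H] [CompleteSpace H] {e : ι → H} (he : Orthonormal ℝ e)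
    (c : ι → ℝ) :
    Summable (fun i => c i • e i) ↔ Summable (fun i => c i ^ 2) := by
  simpa [LinearIsometry.toSpanSingleton_apply] using
    he.orthogonalFamily.summable_iff_norm_sq_summable c

theorem karhunen_loeve_ae_convergence_general
    {Ω : Type*} [MeasureSpace Ω] [IsProbabilityMeasure (volume : Measure Ω)]
    {H : Type*} [NormedAddCommGroup H] [InnerProductSpace ℝ H] [CompleteSpace H]
    (m : H) (e : ℕ → H) (he : Orthonormal ℝ e)
    (lam : ℕ → ℝ) (hlam : ∀ i, 0 ≤ lam i) (hsum : Summable lam)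
    (β : ℕ → Ω → ℝ)
    (hβgauss : ∀ i, Measure.map (β i) volume = gaussianReal 0 1) :
    ∀ᵐ ω, ∃ l : H,
      Tendsto (fun n => m + ∑ i ∈ Finset.range n, (Real.sqrt (lam i) * β i ω) • e i)
        atTop (𝓝 l) := by
  have hβ : ∀ i, AEMeasurable (β i) :=
    fun i => .of_map_ne_zero (by simp [hβgauss i, IsProbabilityMeasure.ne_zero])
  have hmoment :
      ∀ i, ∫⁻ ω, ENNReal.ofReal (lam i * β i ω ^ 2) = ENNReal.ofReal (lam i) := by
    intro i
    simp_rw [ENNReal.ofReal_mul (hlam i)]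
    rw [lintegral_const_mul' _ _ ENNReal.ofReal_ne_top,
      lintegral_ofReal_sq_of_map_eq_gaussianReal (hβgauss i)]
    simp
  have hsq : ∀ᵐ ω, Summable fun i => lam i * β i ω ^ 2 := by
    refine ae_summable_of_tsum_lintegral_ne_top (fun i ω => mul_nonneg (hlam i) (sq_nonneg _))
      (fun i => ((hβ i).pow_const 2).const_mul _) ?_
    rw [tsum_congr hmoment, ← ENNReal.ofReal_tsum_of_nonneg hlam hsum]
    exact ENNReal.ofReal_ne_top
  filter_upwards [hsq] with ω hω
  have hseries : Summable fun i => (Real.sqrt (lam i) * β i ω) • e i :=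
    (he.summable_smul_iff _).2 (by simpa [mul_pow, Real.sq_sqrt (hlam _)] using hω)
  exact ⟨_, tendsto_const_nhds.add hseries.hasSum.tendsto_sum_nat⟩

/-- Almost sure convergence of the Karhunen–Loève expansion (Theorem 2.2):
if `(e_i)` is orthonormal, `(λ_i)` nonnegative and summable, and `(β_i)` are
independent standard Gaussians, then the partial sums of
`m + ∑ i √(λ_i)·β_i·e_i` converge in `H` almost surely. -/
theorem karhunen_loeve_ae_convergence
    {Ω : Type*} [MeasureSpace Ω] [IsProbabilityMeasure (volume : Measure Ω)]
    {H : Type*} [NormedAddCommGroup H] [InnerProductSpace ℝ H] [CompleteSpace H]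
    (m : H) (e : ℕ → H) (he : Orthonormal ℝ e)
    (lam : ℕ → ℝ) (hlam : ∀ i, 0 ≤ lam i) (hsum : Summable lam)
    (β : ℕ → Ω → ℝ) (hβmeas : ∀ i, Measurable (β i))
    (hβindep : iIndepFun β volume)
    (hβgauss : ∀ i, Measure.map (β i) volume = gaussianReal 0 1) :
    ∀ᵐ ω, ∃ l : H,
      Tendsto (fun n => m + ∑ i ∈ Finset.range n, (Real.sqrt (lam i) * β i ω) • e i)
        atTop (𝓝 l) :=
  karhunen_loeve_ae_convergence_general m e he lam hlam hsum β hβgauss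
end
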